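/- Let G be a sub-σ-field of σ(X) with Y ⊥⊥ X | G, and let f : Ω → ℝ be a σ(X)-measurable function in L²(μ). Suppose there exist constants c, v ∈ ℝ such that μ[f|G] = c μ-a.e. and μ[f²|G] − (μ[f|G])² = v μ-a.e. Then μ[f|σ(Y)] = ∫ f dμ μ-a.e., and μ[f²|σ(Y)] − (μ[f|σ(Y)])² = ∫ f² dμ − (∫ f dμ)² μ-a.e.; that is, the conditional variance of f given σ(Y) is almost surely equal to the unconditional variance of f. -/

import Mathlib

/-!
Conditional independence given `G ≤ σ(X)` says that, for every `B ∈ σ(Y)`, conditioning `1_B` on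
`σ(X)` gives no more than conditioning it on `G`: `μ⟦B | σ(X)⟧ = μ⟦B | G⟧`. Moving conditional
expectations across the integral `∫_B g = ∫ g ⬝ 1_B` then shows that a `σ(X)`-measurable `g`
satisfies `μ[g | σ(Y)] = μ[μ[g | G] | σ(Y)]`. Applied to `f` and `f²`, whose conditional
expectations given `G` are the constants `c` and `v + c²`, this makes the conditional mean and
second moment given `σ(Y)` constant, hence equal to the unconditional ones.
-/

open MeasureTheory ProbabilityTheory

/-- `Y ⊥⊥ X | G` : conditional independence of `Y` and `X` given a sub-σ-field `G`,
as defined in the paper: for all `A ∈ σ(X)` and `B ∈ σ(Y)`,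
`μ[1_{A∩B}|G] = μ[1_A|G] ⬝ μ[1_B|G]` a.e.  The ambient σ-field `mΩ` is explicit. -/
def CondIndepSigma {Ω : Type*} (mΩ : MeasurableSpace Ω) (μ : Measure Ω)
    (mX mY G : MeasurableSpace Ω) : Prop :=
  ∀ A : Set Ω, MeasurableSet[mX] A → ∀ B : Set Ω, MeasurableSet[mY] B →
    condExp G (m₀ := mΩ) μ ((A ∩ B).indicator (fun _ => (1 : ℝ))) =ᵐ[μ]
      fun ω => (condExp G (m₀ := mΩ) μ (A.indicator (fun _ => (1 : ℝ)))) ω *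
        (condExp G (m₀ := mΩ) μ (B.indicator (fun _ => (1 : ℝ)))) ω

section

variable {Ω : Type*} {m m₀ : MeasurableSpace Ω} {μ : Measure Ω}

lemma norm_indicator_one_le (s : Set Ω) (ω : Ω) : ‖s.indicator (fun _ => (1 : ℝ)) ω‖ ≤ 1 := by
  by_cases hω : ω ∈ s <;> simp [hω]

lemma ae_norm_condExp_indicator_le_one (s : Set Ω) : ∀ᵐ ω ∂μ, ‖(μ⟦s | m⟧) ω‖ ≤ 1 :=
  ae_bdd_norm_condExp_of_ae_bdd_norm (ae_of_all _ (norm_indicator_one_le s))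

lemma setIntegral_eq_integral_mul_indicator_one {s : Set Ω} (hs : MeasurableSet[m₀] s)
    (f : Ω → ℝ) : ∫ ω in s, f ω ∂μ = ∫ ω, f ω * s.indicator (fun _ => (1 : ℝ)) ω ∂μ := by
  rw [← integral_indicator hs]
  congr 1
  ext ω
  by_cases hω : ω ∈ s <;> simp [hω]

lemma integral_mul_condExp_of_stronglyMeasurable_left (hm : m ≤ m₀) [SigmaFinite (μ.trim hm)]
    {f g : Ω → ℝ} (hf : StronglyMeasurable[m] f) (hfg : Integrable (fun ω => f ω * g ω) μ)
    (hg : Integrable g μ) :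
    ∫ ω, f ω * μ[g | m] ω ∂μ = ∫ ω, f ω * g ω ∂μ :=
  (integral_congr_ae (condExp_mul_of_stronglyMeasurable_left hf hfg hg)).symm.trans
    (integral_condExp hm)

end

namespace CondIndepSigma

variable {Ω : Type*} {mX mY G mΩ : MeasurableSpace Ω} {μ : Measure Ω}
  [IsFiniteMeasure μ]

lemma condExp_indicator_eq (hCI : CondIndepSigma mΩ μ mX mY G) (hX : mX ≤ mΩ) (hY : mY ≤ mΩ)
    (hG : G ≤ mX) {B : Set Ω} (hB : MeasurableSet[mY] B) :
    μ⟦B | mX⟧ =ᵐ[μ] μ⟦B | G⟧ := by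
  have hB₀ : MeasurableSet B := hY B hB
  refine (ae_eq_condExp_of_forall_setIntegral_eq hX ((integrable_const _).indicator hB₀)
    (fun _ _ _ => integrable_condExp.integrableOn) (fun A hA _ => ?_)
    (stronglyMeasurable_condExp.mono hG).aestronglyMeasurable).symm
  have hA₀ : MeasurableSet A := hX A hA
  calc ∫ ω in A, (μ⟦B | G⟧) ω ∂μ
      = ∫ ω, (μ⟦B | G⟧) ω * A.indicator (fun _ => (1 : ℝ)) ω ∂μ :=
        setIntegral_eq_integral_mul_indicator_one hA₀ _
    _ = ∫ ω, (μ⟦B | G⟧) ω * (μ⟦A | G⟧) ω ∂μ :=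
        (integral_mul_condExp_of_stronglyMeasurable_left (hG.trans hX) stronglyMeasurable_condExp
          (((integrable_const _).indicator hA₀).bdd_mul
            integrable_condExp.aestronglyMeasurable (ae_norm_condExp_indicator_le_one B))
          ((integrable_const _).indicator hA₀)).symm
    _ = ∫ ω, (μ⟦A ∩ B | G⟧) ω ∂μ :=
        integral_congr_ae <| (hCI A hA B hB).mono fun _ h => (mul_comm _ _).trans h.symm
    _ = ∫ ω, (A ∩ B).indicator (fun _ => (1 : ℝ)) ω ∂μ := integral_condExp (hG.trans hX)
    _ = ∫ ω in A, B.indicator (fun _ => (1 : ℝ)) ω ∂μ := by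
        rw [setIntegral_eq_integral_mul_indicator_one hA₀]
        congr 1
        ext ω
        by_cases hωA : ω ∈ A <;> by_cases hωB : ω ∈ B <;> simp [hωA, hωB]

lemma condExp_condExp_eq (hCI : CondIndepSigma mΩ μ mX mY G) (hX : mX ≤ mΩ) (hY : mY ≤ mΩ)
    (hG : G ≤ mX) {g : Ω → ℝ} (hg : StronglyMeasurable[mX] g) (hgi : Integrable g μ) :
    μ[μ[g | G] | mY] =ᵐ[μ] μ[g | mY] := by
  refine ae_eq_condExp_of_forall_setIntegral_eq hY hgi
    (fun _ _ _ => integrable_condExp.integrableOn) (fun B hB _ => ?_)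
    stronglyMeasurable_condExp.aestronglyMeasurable
  have hB₀ : MeasurableSet B := hY B hB
  have h1B : Integrable (B.indicator (fun _ => (1 : ℝ))) μ := (integrable_const _).indicator hB₀
  rw [setIntegral_condExp hY integrable_condExp hB]
  calc ∫ ω in B, μ[g | G] ω ∂μ
      = ∫ ω, μ[g | G] ω * B.indicator (fun _ => (1 : ℝ)) ω ∂μ :=
        setIntegral_eq_integral_mul_indicator_one hB₀ _
    _ = ∫ ω, (μ⟦B | G⟧) ω * μ[g | G] ω ∂μ := by
        rw [← integral_mul_condExp_of_stronglyMeasurable_left (hG.trans hX)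
          stronglyMeasurable_condExp
          (integrable_condExp.mul_bdd h1B.aestronglyMeasurable
            (ae_of_all _ (norm_indicator_one_le B))) h1B]
        simp only [mul_comm]
    _ = ∫ ω, g ω * (μ⟦B | mX⟧) ω ∂μ := by
        rw [integral_mul_condExp_of_stronglyMeasurable_left (hG.trans hX)
          stronglyMeasurable_condExp
          (hgi.bdd_mul integrable_condExp.aestronglyMeasurable
            (ae_norm_condExp_indicator_le_one B)) hgi]
        refine integral_congr_ae ?_
        filter_upwards [hCI.condExp_indicator_eq hX hY hG hB] with ω h
        rw [h, mul_comm]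
    _ = ∫ ω in B, g ω ∂μ := by
        rw [integral_mul_condExp_of_stronglyMeasurable_left hX hg
          (hgi.mul_bdd h1B.aestronglyMeasurable (ae_of_all _ (norm_indicator_one_le B))) h1B,
          setIntegral_eq_integral_mul_indicator_one hB₀]

lemma condExp_eq_integral [IsProbabilityMeasure μ] (hCI : CondIndepSigma mΩ μ mX mY G)
    (hX : mX ≤ mΩ) (hY : mY ≤ mΩ) (hG : G ≤ mX) {g : Ω → ℝ} (hg : StronglyMeasurable[mX] g)
    (hgi : Integrable g μ) {k : ℝ} (hk : μ[g | G] =ᵐ[μ] fun _ => k) :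
    μ[g | mY] =ᵐ[μ] fun _ => ∫ ω, g ω ∂μ := by
  have hk_int : ∫ ω, g ω ∂μ = k := by
    rw [← integral_condExp (hG.trans hX), integral_congr_ae hk, integral_const, probReal_univ,
      one_smul]
  rw [hk_int]
  calc μ[g | mY] =ᵐ[μ] μ[μ[g | G] | mY] := (hCI.condExp_condExp_eq hX hY hG hg hgi).symm
    _ =ᵐ[μ] μ[fun _ => k | mY] := condExp_congr_ae hk
    _ = fun _ => k := condExp_const hY k

end CondIndepSigma

/-- The key step of Theorem 7 (GSAVE unbiasedness): if `Y ⊥⊥ X | G` and the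
`σ(X)`-measurable square-integrable `f` has constant conditional mean and constant
conditional variance given `G`, then its conditional mean given `σ(Y)` is the
unconditional mean and its conditional variance given `σ(Y)` is the unconditional
variance, a.e. -/
theorem cond_var_given_Y_eq_var
    {Ω EX EY : Type*} [mΩ : MeasurableSpace Ω] [mEX : MeasurableSpace EX]
    [mEY : MeasurableSpace EY]
    (μ : Measure Ω) [IsProbabilityMeasure μ]
    (X : Ω → EX) (Y : Ω → EY) (hX : Measurable X) (hY : Measurable Y)
    (G : MeasurableSpace Ω) (hG : G ≤ MeasurableSpace.comap X mEX)
    (hCI : CondIndepSigma mΩ μ (MeasurableSpace.comap X mEX) (MeasurableSpace.comap Y mEY) G)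
    (f : Ω → ℝ) (hf : Measurable[MeasurableSpace.comap X mEX] f) (hf2 : MemLp f 2 μ)
    (c v : ℝ)
    (hmean : μ[f|G] =ᵐ[μ] fun _ => c)
    (hvar : (fun ω => (μ[fun ω' => (f ω') ^ 2|G]) ω - ((μ[f|G]) ω) ^ 2)
      =ᵐ[μ] fun _ => v) :
    (μ[f|MeasurableSpace.comap Y mEY] =ᵐ[μ] fun _ => ∫ ω, f ω ∂μ) ∧
    ((fun ω => (μ[fun ω' => (f ω') ^ 2|MeasurableSpace.comap Y mEY]) ω
        - ((μ[f|MeasurableSpace.comap Y mEY]) ω) ^ 2)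
      =ᵐ[μ] fun _ => ∫ ω, (f ω) ^ 2 ∂μ - (∫ ω, f ω ∂μ) ^ 2) := by
  have hsec : μ[fun ω => f ω ^ 2 | G] =ᵐ[μ] fun _ => v + c ^ 2 := by
    filter_upwards [hvar, hmean] with ω hω hωc
    simp only [hωc] at hω
    linarith
  have hmean_Y := hCI.condExp_eq_integral hX.comap_le hY.comap_le hG hf.stronglyMeasurable
    (hf2.integrable one_le_two) hmean
  have hsec_Y := hCI.condExp_eq_integral hX.comap_le hY.comap_le hG
    (hf.pow_const 2).stronglyMeasurable hf2.integrable_sq hsec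
  refine ⟨hmean_Y, ?_⟩
  filter_upwards [hmean_Y, hsec_Y] with ω h1 h2
  rw [h1, h2]
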